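/- The map (f restricted to C)^{-1} : f[C] → C is Lipschitz with constant L = sqrt(Σ_{n=0}^∞ ((2^{n+1}+6)/(2^{n+1}√(2^{n+1})))²)... i.e. for all η, ξ ∈ 2^ℕ, |g(η) - g(ξ)| ≤ L · ‖f(g(η)) - f(g(ξ))‖_{ℓ²} for a finite constant L independent of η, ξ. -/

import Mathlib

noncomputable abbrev ℓ2 : Type := lp (fun _ : ℕ => ℝ) 2

def b2r (b : Bool) : ℝ := if b then 1 else 0

/-- The canonical parametrization `g : 2^ℕ → ℝ` of the fat Cantor set,
`g η = Σ_n η(n)·(2^{n+1}+6)/4^{n+1}`. -/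
noncomputable def cantorMap (η : ℕ → Bool) : ℝ :=
  ∑' n : ℕ, b2r (η n) * (((2:ℝ)^(n+1) + 6) / 4^(n+1))

/-- The point `f(g(η)) = Σ_n ((1+η(n))/√(2^n))·e_{n,b(n)}` of the curve at `g(η)`. -/
noncomputable def curvePoint (e : ℕ × ℕ → ℓ2) (b : ℕ → ℕ) (η : ℕ → Bool) : ℓ2 :=
  ∑' n : ℕ, ((1 + b2r (η n)) / Real.sqrt (2^n)) • e (n, b n)

/-! Write `d n = η n - ξ n ∈ {-1, 0, 1}`. The vectors `e (n, b n)` are orthonormal, so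
`‖f (g η) - f (g ξ)‖² = Σ d n ^ 2 / 2 ^ n ≤ Σ 2⁻ⁿ = 2`. Instead of Cauchy–Schwarz we use
`|d n| = d n ^ 2` together with `(2^{n+1} + 6) / 4^{n+1} ≤ 2 · 2⁻ⁿ`, which gives
`|g η - g ξ| ≤ 2 ‖f (g η) - f (g ξ)‖²`; since that norm is at most `√2`, `L = 2√2` works. -/

section Orthonormal

variable {𝕜 E ι : Type*} [RCLike 𝕜] [NormedAddCommGroup E] [InnerProductSpace 𝕜 E]
  {v : ι → E}

theorem Orthonormal.summable_smul_iff [CompleteSpace E] (hv : Orthonormal 𝕜 v) (c : ι → 𝕜) :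
    Summable (fun i => c i • v i) ↔ Summable (fun i => ‖c i‖ ^ 2) := by
  simpa [LinearIsometry.toSpanSingleton_apply] using
    hv.orthogonalFamily.summable_iff_norm_sq_summable c

theorem Orthonormal.hasSum_norm_sq (hv : Orthonormal 𝕜 v) {c : ι → 𝕜} {x : E}
    (hx : HasSum (fun i => c i • v i) x) : HasSum (fun i => ‖c i‖ ^ 2) (‖x‖ ^ 2) := by
  refine (hx.norm.pow 2).congr' (Filter.Eventually.of_forall fun s => ?_)
  simpa [LinearIsometry.toSpanSingleton_apply] using hv.orthogonalFamily.norm_sum c s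

theorem Orthonormal.comp_graph {α β : Type*} {v : α × β → E} (hv : Orthonormal 𝕜 v)
    (b : α → β) : Orthonormal 𝕜 fun a => v (a, b a) :=
  hv.comp _ fun _ _ h => congrArg Prod.fst h

end Orthonormal

theorem b2r_nonneg (x : Bool) : 0 ≤ b2r x := by
  cases x <;> norm_num [b2r]

theorem b2r_le_one (x : Bool) : b2r x ≤ 1 := by
  cases x <;> norm_num [b2r]

theorem abs_b2r_sub_b2r (x y : Bool) : |b2r x - b2r y| = (b2r x - b2r y) ^ 2 := by
  cases x <;> cases y <;> norm_num [b2r]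

theorem sq_b2r_sub_b2r_le_one (x y : Bool) : (b2r x - b2r y) ^ 2 ≤ 1 := by
  cases x <;> cases y <;> norm_num [b2r]

noncomputable def cantorWeight (n : ℕ) : ℝ := ((2:ℝ) ^ (n + 1) + 6) / 4 ^ (n + 1)

theorem cantorWeight_nonneg (n : ℕ) : 0 ≤ cantorWeight n := by
  unfold cantorWeight; positivity

theorem cantorWeight_le (n : ℕ) : cantorWeight n ≤ 2 * (1 / 2) ^ n := by
  have hpow : (1:ℝ) ≤ 2 ^ n := one_le_pow₀ (by norm_num)
  have hfour : (4:ℝ) ^ (n + 1) = 4 * (2 ^ n) ^ 2 := by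
    rw [← pow_mul, mul_comm n 2, pow_mul]; norm_num [pow_succ, mul_comm]
  rw [cantorWeight, hfour, pow_succ, one_div_pow, div_le_iff₀ (by positivity)]
  field_simp
  nlinarith

theorem hasSum_cantorMap_sub (η ξ : ℕ → Bool) :
    HasSum (fun n => (b2r (η n) - b2r (ξ n)) * cantorWeight n) (cantorMap η - cantorMap ξ) := by
  have hsummable (ζ : ℕ → Bool) : Summable fun n => b2r (ζ n) * cantorWeight n :=
    (summable_geometric_two.mul_left 2).of_nonneg_of_le
      (fun n => mul_nonneg (b2r_nonneg _) (cantorWeight_nonneg n))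
      fun n => (mul_le_of_le_one_left (cantorWeight_nonneg n) (b2r_le_one _)).trans
        (cantorWeight_le n)
  have hsub := (hsummable η).hasSum.sub (hsummable ξ).hasSum
  simp only [← sub_mul] at hsub
  exact hsub

theorem Orthonormal.hasSum_curvePoint {e : ℕ × ℕ → ℓ2} (he : Orthonormal ℝ e) (b : ℕ → ℕ)
    (η : ℕ → Bool) :
    HasSum (fun n => ((1 + b2r (η n)) / Real.sqrt (2 ^ n)) • e (n, b n)) (curvePoint e b η) := by
  refine (((he.comp_graph b).summable_smul_iff _).mpr ?_).hasSum
  refine (summable_geometric_two.mul_left 4).of_nonneg_of_le (fun n => by positivity) fun n => ?_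
  have hcoeff : (1 + b2r (η n)) ^ 2 ≤ 4 := by nlinarith [b2r_nonneg (η n), b2r_le_one (η n)]
  rw [Real.norm_eq_abs, sq_abs, div_pow, Real.sq_sqrt (by positivity), one_div_pow,
    ← div_eq_mul_one_div]
  gcongr

theorem Orthonormal.hasSum_norm_curvePoint_sub_sq {e : ℕ × ℕ → ℓ2} (he : Orthonormal ℝ e)
    (b : ℕ → ℕ) (η ξ : ℕ → Bool) :
    HasSum (fun n => (b2r (η n) - b2r (ξ n)) ^ 2 / 2 ^ n)
      (‖curvePoint e b η - curvePoint e b ξ‖ ^ 2) := by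
  have hdiff := (he.hasSum_curvePoint b η).sub (he.hasSum_curvePoint b ξ)
  simp only [← sub_smul, div_sub_div_same, add_sub_add_left_eq_sub] at hdiff
  convert (he.comp_graph b).hasSum_norm_sq hdiff using 2 with n
  rw [Real.norm_eq_abs, sq_abs, div_pow, Real.sq_sqrt (by positivity)]

/-- the inverse of `f` restricted to the fat Cantor set is Lipschitz: there
is a finite constant `L` with `|g(η) - g(ξ)| ≤ L·‖f(g(η)) - f(g(ξ))‖` for all `η, ξ`. -/
theorem inverse_lipschitz (e : HilbertBasis (ℕ × ℕ) ℝ ℓ2) (b : ℕ → ℕ) :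
    ∃ L : ℝ, 0 < L ∧ ∀ η ξ : ℕ → Bool,
      |cantorMap η - cantorMap ξ| ≤ L * ‖curvePoint (⇑e) b η - curvePoint (⇑e) b ξ‖ := by
  refine ⟨2 * Real.sqrt 2, by positivity, fun η ξ => ?_⟩
  set x := curvePoint (⇑e) b η - curvePoint (⇑e) b ξ
  have hnorm := e.orthonormal.hasSum_norm_curvePoint_sub_sq b η ξ
  have hcantor : |cantorMap η - cantorMap ξ| ≤ 2 * ‖x‖ ^ 2 := by
    refine (hasSum_cantorMap_sub η ξ).norm_le_of_bounded (hnorm.mul_left 2) fun n => ?_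
    rw [Real.norm_eq_abs, abs_mul, abs_b2r_sub_b2r, abs_of_nonneg (cantorWeight_nonneg n)]
    calc _ ≤ (b2r (η n) - b2r (ξ n)) ^ 2 * (2 * (1 / 2) ^ n) := by
          gcongr; exact cantorWeight_le n
      _ = _ := by rw [one_div_pow]; ring
  have hx : ‖x‖ ≤ Real.sqrt 2 := by
    refine Real.le_sqrt_of_sq_le (hasSum_le (fun n => ?_) hnorm hasSum_geometric_two)
    rw [one_div_pow]
    gcongr
    exact sq_b2r_sub_b2r_le_one _ _
  calc |cantorMap η - cantorMap ξ| ≤ 2 * ‖x‖ * ‖x‖ := by rw [mul_assoc, ← sq]; exact hcantor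
    _ ≤ 2 * Real.sqrt 2 * ‖x‖ := by gcongr
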